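/- In any NSB evacuation run on an initial loopless multigraph G(0) on n ≥ 2 vertices, for every frame index k′ ≥ 0: if the maximum degree at the beginning of the frame satisfies Δ(3k′) ≥ 2, then the maximum degree decreases by at least two by the end of the frame, i.e., Δ(3k′ + 3) ≤ Δ(3k′) − 2. -/

import Mathlib

open scoped Classical

namespace NSBPaper

variable {V : Type} [Fintype V] [DecidableEq V]

/-- Degree of a vertex in a loopless multigraph given by multiplicity function `w`. -/
def deg (w : V → V → ℕ) (v : V) : ℕ := ∑ u, w v u

/-- Maximum degree of the multigraph. -/
def maxDeg (w : V → V → ℕ) : ℕ := Finset.univ.sup fun v => deg w v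

/-- The support simple graph of a multigraph: `u` and `v` are adjacent iff `u ≠ v`
and there is at least one multi-edge between them. -/
def support (w : V → V → ℕ) : SimpleGraph V where
  Adj u v := u ≠ v ∧ 1 ≤ w u v ∧ 1 ≤ w v u
  symm := ⟨fun u v h => ⟨h.1.symm, h.2.2, h.2.1⟩⟩
  loopless := ⟨fun v h => h.1 rfl⟩

/-- A set of unordered pairs `M` saturates a vertex `v` if some pair of `M` contains `v`. -/
def Saturates (M : Finset (Sym2 V)) (v : V) : Prop := ∃ e ∈ M, v ∈ e

/-- `M` is a matching of the multigraph `w`: its elements are non-loop edges of the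
support, and no two distinct elements share a vertex. -/
def IsMatching (w : V → V → ℕ) (M : Finset (Sym2 V)) : Prop :=
  (∀ e ∈ M, ¬ e.IsDiag) ∧
  (∀ u v : V, s(u, v) ∈ M → 1 ≤ w u v) ∧
  (∀ e ∈ M, ∀ f ∈ M, e ≠ f → ∀ x : V, x ∈ e → x ∉ f)

/-- `M` is a maximal matching of `w`: no pair can be added keeping it a matching. -/
def IsMaximalMatching (w : V → V → ℕ) (M : Finset (Sym2 V)) : Prop :=
  IsMatching w M ∧ ∀ e : Sym2 V, e ∉ M → ¬ IsMatching w (insert e M)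

/-- Removing a matching `M` from the multigraph `w`: the multiplicity of each pair in `M`
decreases by one. -/
def removeMatching (w : V → V → ℕ) (M : Finset (Sym2 V)) : V → V → ℕ :=
  fun u v => if s(u, v) ∈ M then w u v - 1 else w u v

/-- The subgraph of `G` induced by `Z` is bipartite: there is a set `A` such that every
edge of `G` inside `Z` joins `A` to its complement. -/
def BipartiteOn (G : SimpleGraph V) (Z : Set V) : Prop :=
  ∃ A : Set V, ∀ ⦃u v : V⦄, u ∈ Z → v ∈ Z → G.Adj u v → (u ∈ A ↔ v ∉ A)

/-- The edge multiset of `w` can be partitioned into `T` matchings. -/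
def CanEvacuate (w : V → V → ℕ) (T : ℕ) : Prop :=
  ∃ M : Fin T → Finset (Sym2 V),
    (∀ j, IsMatching w (M j)) ∧
    ∀ u v : V, (Finset.univ.filter fun j => s(u, v) ∈ M j).card = w u v

/-- The vertex-weight of a matching: the sum of the weights of its saturated vertices. -/
noncomputable def matchWeight (φ : V → ℕ) (M : Finset (Sym2 V)) : ℕ :=
  ∑ v : V, if Saturates M v then φ v else 0

/-- `Rfun M k i = 1` iff vertex `i` is saturated by the matching chosen in slot `k`. -/
noncomputable def Rfun (M : ℕ → Finset (Sym2 V)) (k : ℕ) (i : V) : ℕ :=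
  if Saturates (M k) i then 1 else 0

/-- `Ufun M k i` is `R i (k-1) * R i (k-2)` if `k ≡ 2 [MOD 3]` and `R i (k-1)` otherwise,
with `R i k = 0` for `k < 0`. -/
noncomputable def Ufun (M : ℕ → Finset (Sym2 V)) (k : ℕ) (i : V) : ℕ :=
  if k = 0 then 0
  else if k % 3 = 2 then Rfun M (k - 1) i * Rfun M (k - 2) i
  else Rfun M (k - 1) i

/-- Vertex `i` is heavy in `w`: `n * d(i) ≥ (n - 1) * Δ`. -/
def Heavy (w : V → V → ℕ) (i : V) : Prop :=
  (Fintype.card V - 1) * maxDeg w ≤ Fintype.card V * deg w i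

/-- Vertex `i` is critical in `w`: its degree is the maximum degree. -/
def Critical (w : V → V → ℕ) (i : V) : Prop := deg w i = maxDeg w

/-- The NSB weight of vertex `i`, where `u i` records whether `i` received enough
service previously. -/
noncomputable def nsbWeight (w : V → V → ℕ) (u : V → ℕ) (i : V) : ℕ :=
  if Heavy w i then deg w i * (2 - u i) else deg w i

/-- The LC-NSB weight of vertex `i`. -/
noncomputable def lcnsbWeight (w : V → V → ℕ) (u : V → ℕ) (i : V) : ℕ :=
  if Critical w i then 5 - 2 * u i
  else if Heavy w i then 4 - 2 * u i
  else 1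

/-- An NSB evacuation run on the initial multigraph `w0`: in each slot `k`, a matching
`M k` of `G k` maximizing the total NSB weight of saturated vertices is removed. -/
structure NSBRun (w0 : V → V → ℕ) where
  G : ℕ → V → V → ℕ
  M : ℕ → Finset (Sym2 V)
  init : G 0 = w0
  step : ∀ k, G (k + 1) = removeMatching (G k) (M k)
  matching : ∀ k, IsMatching (G k) (M k)
  opt : ∀ k, ∀ M' : Finset (Sym2 V), IsMatching (G k) M' →
    matchWeight (nsbWeight (G k) (Ufun M k)) M' ≤ matchWeight (nsbWeight (G k) (Ufun M k)) (M k)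

/-- An LC-NSB evacuation run on the initial multigraph `w0`. -/
structure LCNSBRun (w0 : V → V → ℕ) where
  G : ℕ → V → V → ℕ
  M : ℕ → Finset (Sym2 V)
  init : G 0 = w0
  step : ∀ k, G (k + 1) = removeMatching (G k) (M k)
  matching : ∀ k, IsMatching (G k) (M k)
  opt : ∀ k, ∀ M' : Finset (Sym2 V), IsMatching (G k) M' →
    matchWeight (lcnsbWeight (G k) (Ufun M k)) M' ≤
      matchWeight (lcnsbWeight (G k) (Ufun M k)) (M k)

end NSBPaper

/-! A slot in which every critical vertex has `U = 0` and the critical vertices induce a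
bipartite subgraph of the support removes one from `Δ`. Indeed, counting degrees verifies
Hall's condition for the critical vertices, and the bipartition turns the resulting system of
distinct neighbours into a matching saturating all of them. Critical vertices with `U = 0` are
exactly the vertices of maximal NSB weight `2Δ`, so an exchange argument shows that a
maximum-weight matching saturates them as well.

If `Δ` dropped by less than two during a frame, the last slot `3k′+2` would have to be such a
slot: its critical vertices were served at most once in the frame, so their product `U`
vanishes, and a maximum-weight matching serves an endpoint of every edge, so along an edge
between two of them exactly one endpoint was served in slot `3k′`. Then `Δ` did not drop in
slot `3k′`, and the middle slot is such a slot too: its critical vertices were not served in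
slot `3k′`, so they have `U = 0` and are pairwise non-adjacent. Hence `Δ` drops in both of the last two
slots after all. -/

namespace NSBPaper

variable {V : Type}

theorem support_mono : Monotone (support : (V → V → ℕ) → SimpleGraph V) :=
  fun _ _ h _ _ hadj => ⟨hadj.1, hadj.2.1.trans (h _ _), hadj.2.2.trans (h _ _)⟩

section Matching

variable {w : V → V → ℕ} {M M' : Finset (Sym2 V)}

theorem Saturates.mono {v : V} (h : Saturates M' v) (hM : M' ⊆ M) : Saturates M v :=
  let ⟨e, he, hve⟩ := h
  ⟨e, hM he, hve⟩

theorem IsMatching.subset (hM : IsMatching w M) (h : M' ⊆ M) : IsMatching w M' :=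
  ⟨fun e he => hM.1 e (h he), fun u v huv => hM.2.1 u v (h huv),
    fun e he f hf => hM.2.2 e (h he) f (h hf)⟩

theorem IsMatching.eq_of_mem (hM : IsMatching w M) {e f : Sym2 V} (he : e ∈ M) (hf : f ∈ M)
    {x : V} (hxe : x ∈ e) (hxf : x ∈ f) : e = f :=
  by_contra fun hne => hM.2.2 e he f hf hne x hxe hxf

theorem IsMatching.adj (hM : IsMatching w M) {a b : V} (h : s(a, b) ∈ M) :
    (support w).Adj a b :=
  ⟨fun hab => hM.1 _ h (Sym2.mk_isDiag_iff.2 hab), hM.2.1 a b h,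
    hM.2.1 b a (Sym2.eq_swap ▸ h)⟩

variable [DecidableEq V]

theorem saturates_insert {e : Sym2 V} {v : V} :
    Saturates (insert e M) v ↔ v ∈ e ∨ Saturates M v := by
  simp only [Saturates, Finset.exists_mem_insert]

theorem IsMatching.not_saturates_erase (hM : IsMatching w M) {e : Sym2 V} (he : e ∈ M)
    {v : V} (hv : v ∈ e) : ¬ Saturates (M.erase e) v := by
  rintro ⟨f, hf, hvf⟩
  exact Finset.ne_of_mem_erase hf (hM.eq_of_mem (Finset.mem_of_mem_erase hf) he hvf hv)

theorem IsMatching.insert (hM : IsMatching w M) {a b : V} (hab : (support w).Adj a b)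
    (ha : ¬ Saturates M a) (hb : ¬ Saturates M b) : IsMatching w (insert s(a, b) M) := by
  have hfresh : ∀ g ∈ M, ∀ x ∈ s(a, b), x ∉ g := by
    rintro g hg x hx hxg
    rcases Sym2.mem_iff.1 hx with rfl | rfl
    exacts [ha ⟨g, hg, hxg⟩, hb ⟨g, hg, hxg⟩]
  refine ⟨?_, fun u v huv => ?_, fun e he f hf hef x hxe hxf => ?_⟩
  · simpa only [Finset.forall_mem_insert, Sym2.mk_isDiag_iff] using ⟨hab.1, hM.1⟩
  · rcases Finset.mem_insert.1 huv with h | h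
    · rcases Sym2.eq_iff.1 h with ⟨rfl, rfl⟩ | ⟨rfl, rfl⟩
      exacts [hab.2.1, hab.2.2]
    · exact hM.2.1 u v h
  · rcases Finset.mem_insert.1 he with rfl | he <;> rcases Finset.mem_insert.1 hf with rfl | hf
    · exact hef rfl
    · exact hfresh f hf x hxe hxf
    · exact hfresh e he x hxf hxe
    · exact hM.2.2 e he f hf hef x hxe hxf

def exchange (M : Finset (Sym2 V)) (i j l : V) : Finset (Sym2 V) :=
  insert s(i, j) (M.erase s(j, l))

theorem isMatching_exchange {i j l : V} (hM : IsMatching w M) (hjl : s(j, l) ∈ M)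
    (hij : (support w).Adj i j) (hi : ¬ Saturates M i) : IsMatching w (exchange M i j l) :=
  (hM.subset (Finset.erase_subset _ _)).insert hij
    (fun h => hi (h.mono (Finset.erase_subset _ _)))
    (hM.not_saturates_erase hjl (Sym2.mem_mk_left j l))

theorem IsMatching.not_saturates_exchange {i j l : V} (hM : IsMatching w M)
    (hjl : s(j, l) ∈ M) (hi : ¬ Saturates M i) : ¬ Saturates (exchange M i j l) l := by
  have hli : l ≠ i := fun h => hi (h ▸ ⟨s(j, l), hjl, Sym2.mem_mk_right j l⟩)
  rw [exchange, saturates_insert, Sym2.mem_iff, not_or, not_or]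
  exact ⟨⟨hli, (hM.adj hjl).ne.symm⟩, hM.not_saturates_erase hjl (Sym2.mem_mk_right j l)⟩

theorem IsMatching.sdiff_exchange_ssubset {Mstar : Finset (Sym2 V)} {i j l : V}
    (hMstar : IsMatching w Mstar) (hij : s(i, j) ∈ Mstar) (hi : ¬ Saturates M i) :
    Mstar \ exchange M i j l ⊂ Mstar \ M := by
  refine (Finset.ssubset_iff_of_subset fun g hg => ?_).2
    ⟨s(i, j), Finset.mem_sdiff.2 ⟨hij, fun h => hi ⟨_, h, Sym2.mem_mk_left i j⟩⟩,
      fun h => (Finset.mem_sdiff.1 h).2 (Finset.mem_insert_self _ _)⟩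
  obtain ⟨hg, hgx⟩ := Finset.mem_sdiff.1 hg
  refine Finset.mem_sdiff.2 ⟨hg, fun hgM => hgx ?_⟩
  by_cases hgjl : g = s(j, l)
  · subst hgjl
    rw [hMstar.eq_of_mem hg hij (Sym2.mem_mk_left j l) (Sym2.mem_mk_right i j)]
    exact Finset.mem_insert_self _ _
  · exact Finset.mem_insert_of_mem (Finset.mem_erase.2 ⟨hgjl, hgM⟩)

end Matching

/-- For injective `F`, the arcs `s(d, F d)` with `d ∈ S` form a matching covering `C`. -/
theorem exists_disjoint_arcs_cover {α : Type*} [DecidableEq α] (A : Set α) (F : α → α)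
    (C : Finset α) (halt : ∀ c ∈ C, F c ∈ C → (c ∈ A ↔ F c ∉ A)) :
    ∃ S ⊆ C, (∀ c ∈ C, c ∈ S ∨ ∃ d ∈ S, F d = c) ∧ ∀ c ∈ S, F c ∉ S := by
  induction C using Finset.strongInduction with
  | H C ih =>
  by_cases hsrc : ∃ c₀ ∈ C, ∀ d ∈ C, F d ≠ c₀
  · obtain ⟨c₀, hc₀, hsrc⟩ := hsrc
    have hC' : (C.erase c₀).erase (F c₀) ⊂ C :=
      (Finset.erase_subset _ _).trans_ssubset (Finset.erase_ssubset hc₀)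
    obtain ⟨S, hSC, hcov, hdisj⟩ := ih _ hC'
      fun c hc hFc => halt c (hC'.subset hc) (hC'.subset hFc)
    refine ⟨insert c₀ S, Finset.insert_subset hc₀ (hSC.trans hC'.subset), fun c hc => ?_,
      fun c hc => ?_⟩
    · by_cases h₀ : c = c₀
      · exact .inl (Finset.mem_insert.2 (.inl h₀))
      by_cases h₁ : F c₀ = c
      · exact .inr ⟨c₀, Finset.mem_insert_self _ _, h₁⟩
      rcases hcov c (by simp [h₀, Ne.symm h₁, hc]) with h | ⟨d, hd, hdc⟩
      exacts [.inl (Finset.mem_insert_of_mem h), .inr ⟨d, Finset.mem_insert_of_mem hd, hdc⟩]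
    · rw [Finset.mem_insert, not_or]
      rcases Finset.mem_insert.1 hc with rfl | hc
      · have hF : F c ≠ c := fun h => by
          have := halt c hc₀ (h.symm ▸ hc₀)
          rw [h] at this
          tauto
        exact ⟨hF, fun h => by simpa using hSC h⟩
      · exact ⟨hsrc c (hC'.subset (hSC hc)), hdisj c hc⟩
  · push Not at hsrc
    refine ⟨C.filter (· ∈ A), Finset.filter_subset _ _, fun c hc => ?_, fun c hc hFc => ?_⟩
    · by_cases hcA : c ∈ A
      · exact .inl (Finset.mem_filter.2 ⟨hc, hcA⟩)
      · obtain ⟨d, hd, rfl⟩ := hsrc c hc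
        exact .inr ⟨d, Finset.mem_filter.2 ⟨hd, by have := halt d hd hc; tauto⟩, rfl⟩
    · rw [Finset.mem_filter] at hc hFc
      exact (halt c hc.1 hFc.1).1 hc.2 hFc.2

section Weights

variable {M : ℕ → Finset (Sym2 V)} {k : ℕ} {i : V}

theorem Rfun_le_one : Rfun M k i ≤ 1 := by
  unfold Rfun
  split_ifs <;> omega

theorem Ufun_le_one : Ufun M k i ≤ 1 := by
  unfold Ufun
  split_ifs
  · omega
  · exact (Nat.mul_le_mul Rfun_le_one Rfun_le_one).trans_eq (mul_one 1)
  · exact Rfun_le_one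

theorem Ufun_succ_eq_zero (h : Rfun M k i = 0) : Ufun M (k + 1) i = 0 := by
  simp only [Ufun, Nat.add_sub_cancel, h, zero_mul, ite_self, Nat.succ_ne_zero]

theorem Ufun_add_two (hk : (k + 2) % 3 = 2) :
    Ufun M (k + 2) i = Rfun M (k + 1) i * Rfun M k i := by
  rw [Ufun, if_neg (Nat.succ_ne_zero _), if_pos hk]
  rfl

variable [Fintype V] {w : V → V → ℕ} {u : V → ℕ}

theorem le_deg (w : V → V → ℕ) (u v : V) : w u v ≤ deg w u :=
  Finset.single_le_sum (fun _ _ => Nat.zero_le _) (Finset.mem_univ v)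

theorem deg_le_maxDeg (w : V → V → ℕ) (v : V) : deg w v ≤ maxDeg w :=
  Finset.le_sup (Finset.mem_univ v)

theorem maxDeg_mono : Monotone (maxDeg : (V → V → ℕ) → ℕ) :=
  fun _ _ h => Finset.sup_mono_fun fun v _ => Finset.sum_le_sum fun u _ => h v u

theorem Critical.heavy (h : Critical w i) : Heavy w i := by
  rw [Heavy, h]
  exact Nat.mul_le_mul_right _ (Nat.sub_le _ _)

theorem nsbWeight_le_two_mul_deg : nsbWeight w u i ≤ 2 * deg w i := by
  unfold nsbWeight
  split_ifs
  · rw [mul_comm]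
    exact Nat.mul_le_mul_right _ (Nat.sub_le _ _)
  · omega

theorem deg_le_nsbWeight (hu : u i ≤ 1) : deg w i ≤ nsbWeight w u i := by
  unfold nsbWeight
  split_ifs
  · exact Nat.le_mul_of_pos_right _ (by omega)
  · exact le_rfl

theorem nsbWeight_of_critical (h : Critical w i) (hu : u i = 0) :
    nsbWeight w u i = 2 * maxDeg w := by
  rw [nsbWeight, if_pos h.heavy, hu, h, mul_comm]

end Weights

section MaxWeight

variable [Fintype V] {w : V → V → ℕ} {M : Finset (Sym2 V)} {φ : V → ℕ}

def IsMaxWeightMatching (w : V → V → ℕ) (φ : V → ℕ) (M : Finset (Sym2 V)) : Prop :=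
  IsMatching w M ∧ ∀ M', IsMatching w M' → matchWeight φ M' ≤ matchWeight φ M

variable [DecidableEq V]

theorem matchWeight_insert {a b : V} (hab : a ≠ b) (ha : ¬ Saturates M a)
    (hb : ¬ Saturates M b) :
    matchWeight φ (insert s(a, b) M) = matchWeight φ M + φ a + φ b := by
  have hsplit : ∀ v, (if Saturates (insert s(a, b) M) v then φ v else 0) =
      (if Saturates M v then φ v else 0) + (if a = v then φ v else 0) +
        (if b = v then φ v else 0) := by
    intro v
    rw [saturates_insert, Sym2.mem_iff]
    by_cases hva : v = a <;> by_cases hvb : v = b <;> simp_all [eq_comm]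
  simp only [matchWeight, hsplit, Finset.sum_add_distrib, Finset.sum_ite_eq, Finset.mem_univ,
    if_true]

theorem IsMatching.matchWeight_erase_add (hM : IsMatching w M) {a b : V} (h : s(a, b) ∈ M) :
    matchWeight φ (M.erase s(a, b)) + φ a + φ b = matchWeight φ M := by
  rw [← matchWeight_insert (hM.adj h).ne (hM.not_saturates_erase h (Sym2.mem_mk_left a b))
    (hM.not_saturates_erase h (Sym2.mem_mk_right a b)), Finset.insert_erase h]

theorem IsMatching.matchWeight_exchange_add {i j l : V} (hM : IsMatching w M)
    (hjl : s(j, l) ∈ M) (hij : i ≠ j) (hi : ¬ Saturates M i) :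
    matchWeight φ (exchange M i j l) + φ l = matchWeight φ M + φ i := by
  have herase := hM.matchWeight_erase_add (φ := φ) hjl
  have hinsert := matchWeight_insert (φ := φ) hij
    (fun h => hi (h.mono (Finset.erase_subset _ _)))
    (hM.not_saturates_erase hjl (Sym2.mem_mk_left j l))
  rw [exchange, hinsert]
  omega

theorem IsMaxWeightMatching.saturates_or_saturates (hM : IsMaxWeightMatching w φ M) {a b : V}
    (hab : (support w).Adj a b) (ha : 0 < φ a) : Saturates M a ∨ Saturates M b := by
  by_contra! h
  have := hM.2 _ (hM.1.insert hab h.1 h.2)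
  rw [matchWeight_insert hab.ne h.1 h.2] at this
  omega

theorem IsMaxWeightMatching.saturates_of_isMatching {C : Set V} {W : ℕ} (hW : 0 < W)
    (hC : ∀ i ∈ C, φ i = W) (hlt : ∀ v ∉ C, φ v < W) {Mstar : Finset (Sym2 V)}
    (hMstar : IsMatching w Mstar) (hcov : ∀ i ∈ C, Saturates Mstar i)
    (hM : IsMaxWeightMatching w φ M) : ∀ i ∈ C, Saturates M i := by
  induction hn : (Mstar \ M).card using Nat.strong_induction_on generalizing M with
  | _ n ih =>
  intro i hiC
  by_contra hi
  obtain ⟨e, he, hie⟩ := hcov i hiC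
  obtain ⟨j, rfl⟩ := Sym2.mem_iff_exists.1 hie
  have hij := hMstar.adj he
  rcases hM.saturates_or_saturates hij (hC i hiC ▸ hW) with hi' | ⟨f, hf, hjf⟩
  · exact hi hi'
  obtain ⟨l, rfl⟩ := Sym2.mem_iff_exists.1 hjf
  have hwt := hM.1.matchWeight_exchange_add (φ := φ) hf hij.ne hi
  have hM' := isMatching_exchange hM.1 hf hij hi
  by_cases hlC : l ∈ C
  · have hopt : IsMaxWeightMatching w φ (exchange M i j l) :=
      ⟨hM', fun M' hM' => by
        have := hM.2 M' hM'
        rw [hC l hlC, hC i hiC] at hwt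
        omega⟩
    exact hM.1.not_saturates_exchange hf hi <|
      ih _ (hn ▸ Finset.card_lt_card (hMstar.sdiff_exchange_ssubset he hi)) hopt rfl l hlC
  · have := hM.2 _ hM'
    have := hlt l hlC
    have := hC i hiC
    omega

theorem IsMatching.deg_removeMatching_add (hM : IsMatching w M) (i : V) :
    deg (removeMatching w M) i + (if Saturates M i then 1 else 0) = deg w i := by
  have hcard : (Finset.univ.filter fun u => s(i, u) ∈ M).card =
      if Saturates M i then 1 else 0 := by
    split_ifs with hi
    · obtain ⟨e, he, hie⟩ := hi
      obtain ⟨j, rfl⟩ := Sym2.mem_iff_exists.1 hie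
      refine Finset.card_eq_one.2 ⟨j, Finset.ext fun u => ?_⟩
      simp only [Finset.mem_filter, Finset.mem_univ, true_and, Finset.mem_singleton]
      exact ⟨fun hu => Sym2.congr_right.1
        (hM.eq_of_mem hu he (Sym2.mem_mk_left i u) (Sym2.mem_mk_left i j)), fun h => h ▸ he⟩
    · exact Finset.card_eq_zero.2 <| Finset.filter_eq_empty_iff.2
        fun u _ hu => hi ⟨_, hu, Sym2.mem_mk_left i u⟩
  rw [← hcard, Finset.card_filter, deg, deg, ← Finset.sum_add_distrib]
  refine Finset.sum_congr rfl fun u _ => ?_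
  unfold removeMatching
  split_ifs with hu
  · have := hM.2.1 i u hu
    omega
  · rfl

end MaxWeight

section Critical

variable [Fintype V] {w : V → V → ℕ}

theorem card_mul_maxDeg_le (hsymm : ∀ u v, w u v = w v u) {A N : Finset V}
    (hA : ∀ a ∈ A, Critical w a) (hN : ∀ a ∈ A, ∀ u, w a u ≠ 0 → u ∈ N) :
    A.card * maxDeg w ≤ N.card * maxDeg w :=
  calc A.card * maxDeg w = ∑ a ∈ A, ∑ u ∈ N, w a u := by
        rw [← smul_eq_mul, ← Finset.sum_const]
        refine Finset.sum_congr rfl fun a ha => ?_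
        rw [← hA a ha, deg]
        exact (Finset.sum_subset (Finset.subset_univ N) fun u _ hu =>
          by_contra fun h => hu (hN a ha u h)).symm
    _ = ∑ u ∈ N, ∑ a ∈ A, w u a := by
        rw [Finset.sum_comm]
        simp only [hsymm]
    _ ≤ ∑ u ∈ N, maxDeg w := Finset.sum_le_sum fun u _ =>
        (Finset.sum_le_sum_of_subset (Finset.subset_univ A)).trans (deg_le_maxDeg w u)
    _ = N.card * maxDeg w := by rw [Finset.sum_const, smul_eq_mul]

theorem exists_injective_adj_of_critical (hsymm : ∀ u v, w u v = w v u)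
    (hloop : ∀ v, w v v = 0) (hΔ : 0 < maxDeg w) :
    ∃ f : V → V, Function.Injective f ∧ ∀ c, Critical w c → (support w).Adj c (f c) := by
  -- Relating every non-critical vertex to all of `V` leaves Hall's condition to the critical ones.
  refine (Fintype.all_card_le_filter_rel_iff_exists_injective
    fun c u => Critical w c → (support w).Adj c u).1 fun A => ?_
  by_cases hA : ∀ a ∈ A, Critical w a
  · refine Nat.le_of_mul_le_mul_right (card_mul_maxDeg_le hsymm hA fun a ha u hu => ?_) hΔ
    have hu' : 1 ≤ w a u := Nat.one_le_iff_ne_zero.2 hu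
    simp only [Finset.mem_filter, Finset.mem_univ, true_and]
    exact ⟨a, ha, fun _ => ⟨fun h => hu (h ▸ hloop a), hu', hsymm a u ▸ hu'⟩⟩
  · push Not at hA
    obtain ⟨a, ha, hna⟩ := hA
    refine (Finset.card_le_univ A).trans_eq (congrArg Finset.card (Finset.ext fun u => ?_))
    simp only [Finset.mem_univ, Finset.mem_filter, true_and, true_iff]
    exact ⟨a, ha, fun h => absurd h hna⟩

theorem exists_isMatching_saturates_critical (hsymm : ∀ u v, w u v = w v u)
    (hloop : ∀ v, w v v = 0) (hΔ : 0 < maxDeg w)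
    (hbip : BipartiteOn (support w) {v | Critical w v}) :
    ∃ M, IsMatching w M ∧ ∀ c, Critical w c → Saturates M c := by
  obtain ⟨F, hFinj, hFadj⟩ := exists_injective_adj_of_critical hsymm hloop hΔ
  obtain ⟨A, hA⟩ := hbip
  obtain ⟨S, hSC, hcov, hdisj⟩ := exists_disjoint_arcs_cover A F
    (Finset.univ.filter (Critical w)) fun c hc hFc =>
      hA (Finset.mem_filter.1 hc).2 (Finset.mem_filter.1 hFc).2 (hFadj c (Finset.mem_filter.1 hc).2)
  have hSadj : ∀ c ∈ S, (support w).Adj c (F c) := fun c hc =>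
    hFadj c (Finset.mem_filter.1 (hSC hc)).2
  refine ⟨S.image fun c => s(c, F c), ⟨?_, fun u v huv => ?_, ?_⟩, fun c hc => ?_⟩
  · simp only [Finset.forall_mem_image, Sym2.mk_isDiag_iff]
    exact fun c hc => (hSadj c hc).ne
  · obtain ⟨c, hc, hcuv⟩ := Finset.mem_image.1 huv
    rcases Sym2.eq_iff.1 hcuv with ⟨rfl, rfl⟩ | ⟨rfl, rfl⟩
    exacts [(hSadj c hc).2.1, (hSadj c hc).2.2]
  · simp only [Finset.forall_mem_image]
    intro c hc d hd hne x hxc hxd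
    have hcd : c ≠ d := fun h => hne (h ▸ rfl)
    rcases Sym2.mem_iff.1 hxc with rfl | rfl <;> rcases Sym2.mem_iff.1 hxd with h | h
    · exact hcd h
    · exact hdisj d hd (h ▸ hc)
    · exact hdisj c hc (h.symm ▸ hd)
    · exact hcd (hFinj h)
  · rcases hcov c (Finset.mem_filter.2 ⟨Finset.mem_univ c, hc⟩) with h | ⟨d, hd, rfl⟩
    exacts [⟨_, Finset.mem_image_of_mem _ h, Sym2.mem_mk_left _ _⟩,
      ⟨_, Finset.mem_image_of_mem _ hd, Sym2.mem_mk_right _ _⟩]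

end Critical

namespace NSBRun

variable [Fintype V] [DecidableEq V] {w0 : V → V → ℕ} (run : NSBRun w0) {k : ℕ}

theorem G_symm (hsymm : ∀ u v, w0 u v = w0 v u) (k : ℕ) (u v : V) :
    run.G k u v = run.G k v u := by
  induction k generalizing u v with
  | zero => rw [run.init]; exact hsymm u v
  | succ k ih => simp only [run.step, removeMatching, Sym2.eq_swap (a := v), ih u v]

theorem G_loopless (hloop : ∀ v, w0 v v = 0) (k : ℕ) (v : V) : run.G k v v = 0 := by
  induction k with
  | zero => rw [run.init]; exact hloop v
  | succ k ih =>
    rw [run.step, removeMatching, if_neg fun h => (run.matching k).adj h |>.ne rfl, ih]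

theorem G_antitone : Antitone run.G :=
  antitone_nat_of_succ_le fun k u v => by
    simp only [run.step, removeMatching]
    split_ifs <;> omega

theorem maxDeg_antitone : Antitone fun k => maxDeg (run.G k) :=
  maxDeg_mono.comp_antitone run.G_antitone

theorem deg_succ_add_Rfun (k : ℕ) (i : V) :
    deg (run.G (k + 1)) i + Rfun run.M k i = deg (run.G k) i := by
  rw [run.step]
  exact (run.matching k).deg_removeMatching_add i

theorem isMaxWeightMatching (k : ℕ) :
    IsMaxWeightMatching (run.G k) (nsbWeight (run.G k) (Ufun run.M k)) (run.M k) :=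
  ⟨run.matching k, run.opt k⟩

theorem one_le_Rfun_add_Rfun {u v : V} (hadj : (support (run.G k)).Adj u v) :
    1 ≤ Rfun run.M k u + Rfun run.M k v := by
  have hpos : 0 < nsbWeight (run.G k) (Ufun run.M k) u :=
    (hadj.2.1.trans (le_deg _ u v)).trans (deg_le_nsbWeight Ufun_le_one)
  rcases (run.isMaxWeightMatching k).saturates_or_saturates hadj hpos with h | h <;>
    simp [Rfun, h]

theorem maxDeg_succ_le_pred (hsat : ∀ i, Critical (run.G k) i → Saturates (run.M k) i) :
    maxDeg (run.G (k + 1)) ≤ maxDeg (run.G k) - 1 := by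
  refine Finset.sup_le fun i _ => ?_
  have hdeg := run.deg_succ_add_Rfun k i
  have hle := deg_le_maxDeg (run.G k) i
  by_cases hi : Saturates (run.M k) i
  · rw [Rfun, if_pos hi] at hdeg
    omega
  · have : deg (run.G k) i ≠ maxDeg (run.G k) := fun h => hi (hsat i h)
    omega

variable (hsymm : ∀ u v, w0 u v = w0 v u) (hloop : ∀ v, w0 v v = 0)
include hsymm hloop

theorem saturates_of_critical (hΔ : 0 < maxDeg (run.G k))
    (hU : ∀ i, Critical (run.G k) i → Ufun run.M k i = 0)
    (hbip : BipartiteOn (support (run.G k)) {v | Critical (run.G k) v}) :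
    ∀ i, Critical (run.G k) i → Saturates (run.M k) i := by
  obtain ⟨Mstar, hMstar, hcov⟩ := exists_isMatching_saturates_critical
    (run.G_symm hsymm k) (run.G_loopless hloop k) hΔ hbip
  refine (run.isMaxWeightMatching k).saturates_of_isMatching (C := {v | Critical (run.G k) v})
    (by omega : 0 < 2 * maxDeg (run.G k)) (fun i hi => nsbWeight_of_critical hi (hU i hi))
    (fun v hv => ?_) hMstar hcov
  have := lt_of_le_of_ne (deg_le_maxDeg _ v) hv
  have := nsbWeight_le_two_mul_deg (w := run.G k) (u := Ufun run.M k) (i := v)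
  omega

theorem saturates_critical_succ (hΔ : maxDeg (run.G k) ≤ maxDeg (run.G (k + 1)))
    (hpos : 0 < maxDeg (run.G (k + 1))) :
    ∀ i, Critical (run.G (k + 1)) i → Saturates (run.M (k + 1)) i := by
  have hR : ∀ i, Critical (run.G (k + 1)) i → Rfun run.M k i = 0 := fun i hi => by
    have := run.deg_succ_add_Rfun k i
    have := deg_le_maxDeg (run.G k) i
    unfold Critical at hi
    omega
  refine run.saturates_of_critical hsymm hloop hpos (fun i hi => Ufun_succ_eq_zero (hR i hi))
    ⟨Set.univ, fun c d hc hd hcd => ?_⟩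
  have := run.one_le_Rfun_add_Rfun (support_mono (run.G_antitone k.le_succ) hcd)
  have := hR c hc
  have := hR d hd
  omega

theorem saturates_critical_add_two (hk : (k + 2) % 3 = 2)
    (hΔ : maxDeg (run.G k) ≤ maxDeg (run.G (k + 2)) + 1) (hpos : 0 < maxDeg (run.G (k + 2))) :
    ∀ i, Critical (run.G (k + 2)) i → Saturates (run.M (k + 2)) i := by
  have hR : ∀ i, Critical (run.G (k + 2)) i → Rfun run.M k i + Rfun run.M (k + 1) i ≤ 1 :=
    fun i hi => by
      have := run.deg_succ_add_Rfun k i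
      have : deg (run.G (k + 2)) i + Rfun run.M (k + 1) i = deg (run.G (k + 1)) i :=
        run.deg_succ_add_Rfun (k + 1) i
      have := deg_le_maxDeg (run.G k) i
      unfold Critical at hi
      omega
  refine run.saturates_of_critical hsymm hloop hpos (fun i hi => ?_)
    ⟨{v | Rfun run.M k v = 1}, fun c d hc hd hcd => ?_⟩
  · have := hR i hi
    rw [Ufun_add_two hk]
    exact Nat.mul_eq_zero.2 (by omega)
  · have := run.one_le_Rfun_add_Rfun (support_mono (run.G_antitone (by omega : k ≤ k + 2)) hcd)
    have := run.one_le_Rfun_add_Rfun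
      (support_mono (run.G_antitone (by omega : k + 1 ≤ k + 2)) hcd)
    have := hR c hc
    have := hR d hd
    simp only [Set.mem_ofPred_eq]
    omega

end NSBRun

theorem nsb_frame_decrease_general {V : Type} [Fintype V] [DecidableEq V]
    (w0 : V → V → ℕ) (hsymm : ∀ u v, w0 u v = w0 v u) (hloop : ∀ v, w0 v v = 0)
    (run : NSBRun w0) (k' : ℕ)
    (h : 2 ≤ maxDeg (run.G (3 * k'))) :
    maxDeg (run.G (3 * k' + 3)) ≤ maxDeg (run.G (3 * k')) - 2 := by
  by_contra! hlt
  have h₁₀ : maxDeg (run.G (3 * k' + 1)) ≤ maxDeg (run.G (3 * k')) :=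
    run.maxDeg_antitone (by omega)
  have h₂₁ : maxDeg (run.G (3 * k' + 2)) ≤ maxDeg (run.G (3 * k' + 1)) :=
    run.maxDeg_antitone (by omega)
  have h₃₂ : maxDeg (run.G (3 * k' + 3)) ≤ maxDeg (run.G (3 * k' + 2)) :=
    run.maxDeg_antitone (by omega)
  have h₃ : maxDeg (run.G (3 * k' + 3)) ≤ maxDeg (run.G (3 * k' + 2)) - 1 :=
    run.maxDeg_succ_le_pred <|
      run.saturates_critical_add_two hsymm hloop (by omega) (by omega) (by omega)
  have h₂ : maxDeg (run.G (3 * k' + 2)) ≤ maxDeg (run.G (3 * k' + 1)) - 1 :=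
    run.maxDeg_succ_le_pred <| run.saturates_critical_succ hsymm hloop (by omega) (by omega)
  omega

/-- In any NSB evacuation run, if `Δ(3k′) ≥ 2` then
`Δ(3k′ + 3) ≤ Δ(3k′) − 2`. -/
theorem nsb_frame_decrease {V : Type} [Fintype V] [DecidableEq V]
    (w0 : V → V → ℕ) (hsymm : ∀ u v, w0 u v = w0 v u) (hloop : ∀ v, w0 v v = 0)
    (hn : 2 ≤ Fintype.card V)
    (run : NSBRun w0) (k' : ℕ)
    (h : 2 ≤ maxDeg (run.G (3 * k'))) :
    maxDeg (run.G (3 * k' + 3)) ≤ maxDeg (run.G (3 * k')) - 2 :=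
  nsb_frame_decrease_general w0 hsymm hloop run k' h

end NSBPaper
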